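/- Let c ∈ {1,…,K}^n, let W ∈ R^{n×n} satisfy W_{ij} ≥ U > 0 whenever c_i = c_j and W_{ij} ≤ L < U whenever c_i ≠ c_j. Then for any Z with 0 ≤ Z_{ij} ≤ 1 and Σ_{ij} Z_{ij} = Σ_{ij} Z̄_{ij}(c), the inner product gap satisfies ⟨W, Z̄(c)⟩ − ⟨W, Z⟩ ≥ ((U − L)/2) Σ_{ij} |Z̄_{ij}(c) − Z_{ij}|. -/

import Mathlib

/-!
Write `f = Z̄(c) - Z`. Then `f ≥ 0` on within-community pairs, `f ≤ 0` on between-community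
pairs, and `∑ f = 0`, so the positive and the negative parts of `f` have the same mass `S`,
and `∑ |f| = 2 S`. On the positive part `W ≥ U` and on the negative part `W ≤ L`, hence
`⟨W, f⟩ ≥ U S - L S = ((U - L) / 2) ∑ |f|`.
-/

open Finset

section SignSplit

variable {ι : Type*} [Fintype ι] (p : ι → Prop) [DecidablePred p] {f : ι → ℝ}

theorem sum_abs_eq_two_mul_sum_filter_of_sum_eq_zero
    (hpos : ∀ i, p i → 0 ≤ f i) (hneg : ∀ i, ¬p i → f i ≤ 0) (hsum : ∑ i, f i = 0) :
    ∑ i, |f i| = 2 * ∑ i ∈ univ.filter p, f i := by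
  have hcompl : ∑ i ∈ univ.filter (¬p ·), f i = -∑ i ∈ univ.filter p, f i := by
    rw [← sum_filter_add_sum_filter_not univ p] at hsum
    linarith
  rw [← sum_filter_add_sum_filter_not univ p,
    sum_congr rfl fun i hi => abs_of_nonneg (hpos i (mem_filter.1 hi).2),
    sum_congr rfl fun i hi => abs_of_nonpos (hneg i (mem_filter.1 hi).2),
    sum_neg_distrib, hcompl]
  ring

theorem sub_mul_sum_filter_le_sum_mul (w : ι → ℝ) {U L : ℝ}
    (hin : ∀ i, p i → U ≤ w i) (hout : ∀ i, ¬p i → w i ≤ L)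
    (hpos : ∀ i, p i → 0 ≤ f i) (hneg : ∀ i, ¬p i → f i ≤ 0) (hsum : ∑ i, f i = 0) :
    (U - L) * ∑ i ∈ univ.filter p, f i ≤ ∑ i, w i * f i := by
  rw [← sum_filter_add_sum_filter_not univ p] at hsum ⊢
  have hin_le : U * ∑ i ∈ univ.filter p, f i ≤ ∑ i ∈ univ.filter p, w i * f i := by
    rw [mul_sum]
    exact sum_le_sum fun i hi =>
      mul_le_mul_of_nonneg_right (hin i (mem_filter.1 hi).2) (hpos i (mem_filter.1 hi).2)
  have hout_le : L * ∑ i ∈ univ.filter (¬p ·), f i ≤ ∑ i ∈ univ.filter (¬p ·), w i * f i := by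
    rw [mul_sum]
    exact sum_le_sum fun i hi =>
      mul_le_mul_of_nonpos_right (hout i (mem_filter.1 hi).2) (hneg i (mem_filter.1 hi).2)
  linear_combination hin_le + hout_le - L * hsum

theorem half_sub_mul_sum_abs_le_sum_mul (w : ι → ℝ) {U L : ℝ}
    (hin : ∀ i, p i → U ≤ w i) (hout : ∀ i, ¬p i → w i ≤ L)
    (hpos : ∀ i, p i → 0 ≤ f i) (hneg : ∀ i, ¬p i → f i ≤ 0) (hsum : ∑ i, f i = 0) :
    (U - L) / 2 * ∑ i, |f i| ≤ ∑ i, w i * f i := by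
  rw [sum_abs_eq_two_mul_sum_filter_of_sum_eq_zero p hpos hneg hsum]
  linarith [sub_mul_sum_filter_le_sum_mul p w hin hout hpos hneg hsum]

end SignSplit

theorem stmt_12_general (n K : ℕ) (c : Fin n → Fin K)
    (W : Matrix (Fin n) (Fin n) ℝ) (U L : ℝ)
    (hWin : ∀ i j, c i = c j → U ≤ W i j)
    (hWout : ∀ i j, c i ≠ c j → W i j ≤ L)
    (Zbar : Matrix (Fin n) (Fin n) ℝ)
    (hZbar : ∀ i j, Zbar i j = if c i = c j then 1 else 0)
    (Z : Matrix (Fin n) (Fin n) ℝ)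
    (hZ0 : ∀ i j, 0 ≤ Z i j) (hZ1 : ∀ i j, Z i j ≤ 1)
    (hsum : ∑ i, ∑ j, Z i j = ∑ i, ∑ j, Zbar i j) :
    ((U - L) / 2) * ∑ i, ∑ j, |Zbar i j - Z i j| ≤
      (∑ i, ∑ j, W i j * Zbar i j) - ∑ i, ∑ j, W i j * Z i j := by
  have key := half_sub_mul_sum_abs_le_sum_mul (fun x : Fin n × Fin n => c x.1 = c x.2)
    (f := fun x => Zbar x.1 x.2 - Z x.1 x.2) (fun x => W x.1 x.2)
    (fun x => hWin x.1 x.2) (fun x => hWout x.1 x.2)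
    (fun x hx => by simpa [hZbar, hx] using hZ1 x.1 x.2)
    (fun x hx => by simpa [hZbar, hx] using hZ0 x.1 x.2)
    (by simp [Fintype.sum_prod_type, sum_sub_distrib, hsum])
  simpa [Fintype.sum_prod_type, mul_sub, sum_sub_distrib] using key

theorem stmt_12 (n K : ℕ) (c : Fin n → Fin K)
    (W : Matrix (Fin n) (Fin n) ℝ) (U L : ℝ) (hU : 0 < U) (hLU : L < U)
    (hWin : ∀ i j, c i = c j → U ≤ W i j)
    (hWout : ∀ i j, c i ≠ c j → W i j ≤ L)
    (Zbar : Matrix (Fin n) (Fin n) ℝ)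
    (hZbar : ∀ i j, Zbar i j = if c i = c j then 1 else 0)
    (Z : Matrix (Fin n) (Fin n) ℝ)
    (hZ0 : ∀ i j, 0 ≤ Z i j) (hZ1 : ∀ i j, Z i j ≤ 1)
    (hsum : ∑ i, ∑ j, Z i j = ∑ i, ∑ j, Zbar i j) :
    ((U - L) / 2) * ∑ i, ∑ j, |Zbar i j - Z i j| ≤
      (∑ i, ∑ j, W i j * Zbar i j) - ∑ i, ∑ j, W i j * Z i j :=
  stmt_12_general n K c W U L hWin hWout Zbar hZbar Z hZ0 hZ1 hsum
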